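/- Let g be a Lie algebra over a field k, let n ≥ 2, and let r : g → n_n(k) be a flag homomorphism. Then the commutant C(r) = {A ∈ n_n(k) : A·r(v) = r(v)·A for all v ∈ g} is a k-subspace of n_n(k) satisfying 1 ≤ dim_k C(r) ≤ n − 1. In particular the matrix unit E_{1,n} (with 1 in entry (1,n) and 0 elsewhere) belongs to C(r). (This is the infinitesimal form of the paper's bound 2 ≤ dim Aut(r) ≤ n, since Aut(r) = G_m × exp(C(r)).) -/

import Mathlib

/-!
Both `E₁ₙ * r v` and `r v * E₁ₙ` vanish because `r v` is strictly upper triangular, so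
`0 ≠ E₁ₙ ∈ C(r)`. For the upper bound, `A ∈ C(r)` is determined by its first row. Indeed,
column `j` of `A * r v` only involves the columns of `A` before `j`; so, going from left to
right, `r v * A = A * r v` shows that each column of `A` is killed by every `r v`. A vector
killed by every `r v` is supported on the first coordinate: at a last nonzero coordinate
`m > 1`, the flag entry `λ_{m-1,m}` would see it. Since the first row of `A` starts with a zero,
`A ↦ A₁` embeds `C(r)` into a proper subspace of `kⁿ`.
-/

attribute [local instance 100] LieRing.ofAssociativeRing

/-- The commutant `C(r)` of a homomorphism `r : g → n_n(k)` inside the strictly upper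
triangular matrices: the subspace of strictly upper triangular matrices commuting with
every `r v`. -/
def commutant {k : Type*} [Field k] {g : Type*} [LieRing g] [LieAlgebra k g] {n : ℕ}
    (r : g →ₗ⁅k⁆ Matrix (Fin n) (Fin n) k) : Submodule k (Matrix (Fin n) (Fin n) k) where
  carrier := {A | (∀ i j : Fin n, j ≤ i → A i j = 0) ∧ ∀ v : g, A * r v = r v * A}
  add_mem' := by
    rintro A B ⟨hA1, hA2⟩ ⟨hB1, hB2⟩
    refine ⟨fun i j hij => ?_, fun v => ?_⟩
    · simp [Matrix.add_apply, hA1 i j hij, hB1 i j hij]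
    · rw [Matrix.add_mul, Matrix.mul_add, hA2 v, hB2 v]
  zero_mem' := by
    refine ⟨fun i j _ => rfl, fun v => ?_⟩
    rw [Matrix.zero_mul, Matrix.mul_zero]
  smul_mem' := by
    rintro c A ⟨hA1, hA2⟩
    refine ⟨fun i j hij => ?_, fun v => ?_⟩
    · simp [Matrix.smul_apply, hA1 i j hij]
    · rw [Matrix.smul_mul, Matrix.mul_smul, hA2 v]

theorem Matrix.commute_single_of_isBot_of_isTop {ι R : Type*} [LE ι] [Fintype ι] [DecidableEq ι]
    [Semiring R] {i₀ j₀ : ι}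
    (hi₀ : IsBot i₀) (hj₀ : IsTop j₀) (c : R) {M : Matrix ι ι R}
    (hM : ∀ i j, j ≤ i → M i j = 0) : Commute (single i₀ j₀ c) M := by
  have hl : single i₀ j₀ c * M = 0 := by
    ext a b
    by_cases ha : a = i₀
    · simp [ha, hM j₀ b (hj₀ b)]
    · exact single_mul_apply_of_ne c _ _ _ _ ha M
  have hr : M * single i₀ j₀ c = 0 := by
    ext a b
    by_cases hb : b = j₀
    · simp [hb, hM a i₀ (hi₀ a)]
    · exact mul_single_apply_of_ne c _ _ _ _ hb M
  exact hl.trans hr.symm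

section StrictlyUpperTriangular

open Matrix

variable {ι κ R : Type*} [LinearOrder ι] [Fintype ι] [Semiring R]

theorem apply_eq_zero_of_forall_mulVec_eq_zero [NoZeroDivisors R] {M : κ → Matrix ι ι R}
    (hM : ∀ v i j, j ≤ i → M v i j = 0) (hflag : ∀ i j, i ⋖ j → ∃ v, M v i j ≠ 0)
    {x : ι → R} (hx : ∀ v, M v *ᵥ x = 0) {j : ι} (hj : ¬IsMin j) : x j = 0 := by
  induction j using WellFoundedGT.induction with
  | _ j ih =>
  obtain ⟨i, hij⟩ : ∃ i, i ⋖ j := by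
    obtain ⟨l, hl⟩ := not_isMin_iff.mp hj
    obtain ⟨i, -, hi⟩ := exists_le_covBy_of_lt hl
    exact ⟨i, hi⟩
  obtain ⟨v, hv⟩ := hflag i j hij
  have hsum : ∑ l, M v i l * x l = M v i j * x j := by
    refine Finset.sum_eq_single j (fun l _ hlj => ?_) (by simp)
    rcases le_or_gt l i with hli | hil
    · rw [hM v i l hli, zero_mul]
    · have hjl : j < l := lt_of_le_of_ne (not_lt.mp (hij.2 hil)) (Ne.symm hlj)
      rw [ih l hjl (not_isMin_of_lt hjl), mul_zero]
  have hrow : ∑ l, M v i l * x l = 0 := congrFun (hx v) i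
  rw [hsum] at hrow
  exact (mul_eq_zero.mp hrow).resolve_left hv

theorem eq_zero_of_forall_commute_of_row_eq_zero [NoZeroDivisors R] {M : κ → Matrix ι ι R}
    (hM : ∀ v i j, j ≤ i → M v i j = 0) (hflag : ∀ i j, i ⋖ j → ∃ v, M v i j ≠ 0)
    {A : Matrix ι ι R} (hA : ∀ v, Commute A (M v)) {i₀ : ι} (hi₀ : IsBot i₀)
    (hrow : ∀ j, A i₀ j = 0) : A = 0 := by
  suffices h : ∀ j i, A i j = 0 from Matrix.ext fun i j => h j i
  intro j
  induction j using WellFoundedLT.induction with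
  | _ j ih =>
  intro i
  by_cases hi : IsMin i
  · rw [le_antisymm (hi (hi₀ i)) (hi₀ i)]
    exact hrow j
  have hcol : ∀ v, M v *ᵥ (fun l => A l j) = 0 := fun v => funext fun l => by
    change (M v * A) l j = 0
    rw [← (hA v).eq, Matrix.mul_apply]
    refine Finset.sum_eq_zero fun m _ => ?_
    rcases lt_or_ge m j with hmj | hjm
    · rw [ih m hmj l, zero_mul]
    · rw [hM v m j hjm, mul_zero]
  exact apply_eq_zero_of_forall_mulVec_eq_zero hM hflag hcol hi

end StrictlyUpperTriangular

section Commutant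

variable {k : Type*} [Field k] {g : Type*} [LieRing g] [LieAlgebra k g] {n : ℕ}
  {r : g →ₗ⁅k⁆ Matrix (Fin n) (Fin n) k}

theorem single_mem_commutant (hr : ∀ (v : g) (i j : Fin n), j ≤ i → r v i j = 0)
    {i₀ j₀ : Fin n} (hi₀ : IsBot i₀) (hj₀ : IsTop j₀) (hij : i₀ < j₀) (c : k) :
    Matrix.single i₀ j₀ c ∈ commutant r := by
  refine ⟨fun i j hji => Matrix.single_apply_of_ne _ _ _ _ _ ?_, fun v =>
    (Matrix.commute_single_of_isBot_of_isTop hi₀ hj₀ c (hr v)).eq⟩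
  rintro ⟨rfl, rfl⟩
  exact hji.not_gt hij

theorem finrank_commutant_lt (hn : 0 < n) (hr : ∀ (v : g) (i j : Fin n), j ≤ i → r v i j = 0)
    (hflag : ∀ i j : Fin n, i ⋖ j → ∃ v, r v i j ≠ 0) :
    Module.finrank k (commutant r) < n := by
  let i₀ : Fin n := ⟨0, hn⟩
  let firstRow : commutant r →ₗ[k] Fin n → k :=
    { toFun := fun A => A.1 i₀, map_add' := fun _ _ => rfl, map_smul' := fun _ _ => rfl }
  have hinj : Function.Injective firstRow :=
    (injective_iff_map_eq_zero firstRow).2 fun A hA => Subtype.ext <|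
      eq_zero_of_forall_commute_of_row_eq_zero hr hflag A.2.2 (fun _ => Nat.zero_le _)
        (congrFun hA)
  have hrange : LinearMap.range firstRow ≠ ⊤ := fun h => by
    obtain ⟨A, hA⟩ := LinearMap.range_eq_top.mp h (Pi.single i₀ 1)
    have hA₀ := congrFun hA i₀
    change A.1 i₀ i₀ = (Pi.single i₀ 1 : Fin n → k) i₀ at hA₀
    rw [A.2.1 i₀ i₀ le_rfl, Pi.single_eq_same] at hA₀
    exact zero_ne_one hA₀
  calc Module.finrank k (commutant r) = Module.finrank k (LinearMap.range firstRow) :=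
        (LinearMap.finrank_range_of_inj hinj).symm
    _ < Module.finrank k (Fin n → k) := Submodule.finrank_lt hrange
    _ = n := Module.finrank_fin_fun k

end Commutant

/-- Let `r : g → n_n(k)` be a flag homomorphism with `n ≥ 2`.  Then the
commutant `C(r)` of `r` in the strictly upper triangular matrices is a subspace of dimension
between `1` and `n - 1`, and the matrix unit `E_{1,n}` belongs to it. -/
theorem stmt_7 {k : Type*} [Field k] {g : Type*} [LieRing g] [LieAlgebra k g] {n : ℕ}
    (hn : 2 ≤ n)
    (r : g →ₗ⁅k⁆ Matrix (Fin n) (Fin n) k)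
    (hr : ∀ (v : g) (i j : Fin n), j ≤ i → r v i j = 0)
    (hflag : ∀ (i : ℕ) (hi : i + 1 < n), ∃ v : g, r v ⟨i, by omega⟩ ⟨i + 1, hi⟩ ≠ 0) :
    1 ≤ Module.finrank k (commutant r) ∧
    Module.finrank k (commutant r) ≤ n - 1 ∧
    Matrix.single (⟨0, by omega⟩ : Fin n) (⟨n - 1, by omega⟩ : Fin n) (1 : k) ∈
      commutant r := by
  have hE := single_mem_commutant hr (i₀ := ⟨0, by omega⟩) (j₀ := ⟨n - 1, by omega⟩)
    (fun i => Nat.zero_le i.1) (fun j => Nat.le_sub_one_of_lt j.2) (Fin.mk_lt_mk.mpr (by omega)) 1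
  have hcov : ∀ i j : Fin n, i ⋖ j → ∃ v, r v i j ≠ 0 := by
    rintro ⟨i, hi⟩ ⟨j, hj⟩ hij
    obtain rfl : i + 1 = j := Order.covBy_iff_add_one_eq.mp (Fin.covBy_iff.mp hij)
    exact hflag i hj
  refine ⟨Submodule.one_le_finrank_iff.mpr ((Submodule.ne_bot_iff _).mpr ⟨_, hE, fun h => ?_⟩),
    Nat.le_sub_one_of_lt (finrank_commutant_lt (by omega) hr hcov), hE⟩
  simpa using congrFun (congrFun h ⟨0, by omega⟩) ⟨n - 1, by omega⟩
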